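/- Let Γ ⊂ ℝ^{d+1} be an Ahlfors–David d-regular closed set with dyadic cube system 𝒟(Γ), let Δ₀ ∈ 𝒟(Γ) and E ⊂ Δ₀ Borel with 0 < ℋ^d(E) < ∞, and let E' ⊂ E satisfy: ℋ^d(E ∩ Δ) ≥ C₀⁻¹ ℋ^d(Δ) for every cube Δ ⊂ Δ₀ meeting E'. Suppose ℬ ⊂ 𝒟(Γ) is a Carleson family, i.e., for each Δ ∈ 𝒟(Γ), the sum of ℋ^d(Δ') over Δ' ∈ ℬ with Δ' ⊂ Δ is ≲ ℋ^d(Δ). Then for every cube Δ ⊂ Δ₀ with Δ ∩ E' ≠ ∅, there exists a cube Δ' ⊂ Δ with Δ' ∉ ℬ and ℓ(Δ') ∼ ℓ(Δ), with implicit constants depending only on the ADR and Carleson constants and C₀. -/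
import Mathlib


open MeasureTheory Metric Set
open scoped ENNReal NNReal

/-- A system of dyadic (metric) "cubes" on a set `Γ` in a metric space, in the sense of
Christ–David–Hytönen–Martikainen. -/
structure DyadicSystem {X : Type*} [MetricSpace X] [MeasurableSpace X]
    (Γ : Set X) (c₀ c₁ : ℝ) where
  gens : ℤ → Set (Set X)
  measurable : ∀ n, ∀ Δ ∈ gens n, MeasurableSet Δ
  cover : ∀ n, ⋃₀ gens n = Γ
  pairwiseDisjoint : ∀ n, (gens n).PairwiseDisjoint id
  nested : ∀ m n : ℤ, n ≤ m → ∀ Δ ∈ gens m, ∀ Δ' ∈ gens n,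
    (Δ ∩ Δ').Nonempty → Δ ⊆ Δ'
  center : ℤ → Set X → X
  center_mem : ∀ n, ∀ Δ ∈ gens n, center n Δ ∈ Γ
  ball_subset : ∀ n, ∀ Δ ∈ gens n, ball (center n Δ) (c₁ * (5 * c₀ ^ n)) ∩ Γ ⊆ Δ
  subset_ball : ∀ n, ∀ Δ ∈ gens n, Δ ⊆ ball (center n Δ) (5 * c₀ ^ n)

/-- Lemma 4.4 of the paper. Let `Γ` be an Ahlfors–David `d`-regular closed set
with a dyadic cube system (generation ratio `1/2`), `Δ₀` a cube, `E ⊆ Δ₀` Borel with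
`0 < ℋ^d(E) < ∞`, and `E' ⊆ E` such that `ℋ^d(E ∩ Δ) ≥ C₀⁻¹ ℋ^d(Δ)` for every cube `Δ ⊆ Δ₀`
meeting `E'`. If `ℬ` is a Carleson family of cubes, then every cube `Δ ⊆ Δ₀` meeting `E'`
contains a cube `Δ' ∉ ℬ` with `ℓ(Δ') ∼ ℓ(Δ)`. -/
theorem stmt1 (d : ℕ) (Γ : Set (EuclideanSpace ℝ (Fin (d + 1)))) (hΓ : IsClosed Γ)
    (c₁ : ℝ) (hc₁ : 0 < c₁) (D : DyadicSystem Γ (1 / 2 : ℝ) c₁)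
    -- Ahlfors–David d-regularity of Γ with constant C_A:
    (C_A : ℝ≥0∞) (hC_A : 1 ≤ C_A) (hC_Atop : C_A < ⊤)
    (hADR : ∀ x ∈ Γ, ∀ r : ℝ, 0 < r → ENNReal.ofReal r < EMetric.diam Γ →
      ENNReal.ofReal (r ^ (d : ℝ)) / C_A ≤ μH[d] (Γ ∩ ball x r) ∧
      μH[d] (Γ ∩ ball x r) ≤ C_A * ENNReal.ofReal (r ^ (d : ℝ)))
    (n₀ : ℤ) (Δ₀ : Set (EuclideanSpace ℝ (Fin (d + 1)))) (hΔ₀ : Δ₀ ∈ D.gens n₀)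
    (E : Set (EuclideanSpace ℝ (Fin (d + 1)))) (hE : MeasurableSet E) (hEΔ₀ : E ⊆ Δ₀)
    (hEpos : 0 < μH[d] E) (hEfin : μH[d] E < ⊤)
    -- the set E' from Lemma 4.3:
    (E' : Set (EuclideanSpace ℝ (Fin (d + 1)))) (hE' : E' ⊆ E)
    (C₀ : ℝ≥0∞) (hC₀ : 1 < C₀) (hC₀top : C₀ < ⊤)
    (hdens : ∀ n : ℤ, ∀ Δ ∈ D.gens n, Δ ⊆ Δ₀ → (Δ ∩ E').Nonempty →
      C₀⁻¹ * μH[d] Δ ≤ μH[d] (E ∩ Δ))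
    -- ℬ is a Carleson family with constant C_B:
    (ℬ : Set (Set (EuclideanSpace ℝ (Fin (d + 1))))) (hℬ : ∀ B ∈ ℬ, ∃ n : ℤ, B ∈ D.gens n)
    (C_B : ℝ≥0∞) (hC_B : C_B < ⊤)
    (hCar : ∀ n : ℤ, ∀ Δ ∈ D.gens n,
      (∑' Δ' : {Δ' : (Σ m : ℤ, Set (EuclideanSpace ℝ (Fin (d + 1)))) //
          Δ'.2 ∈ D.gens Δ'.1 ∧ Δ'.2 ∈ ℬ ∧ Δ'.2 ⊆ Δ}, μH[d] Δ'.1.2)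
        ≤ C_B * μH[d] Δ) :
    -- conclusion: a not-too-small cube outside ℬ inside every cube meeting E'
    ∃ c : ℝ, 0 < c ∧
      ∀ n : ℤ, ∀ Δ ∈ D.gens n, Δ ⊆ Δ₀ → (Δ ∩ E').Nonempty →
        ∃ m : ℤ, n ≤ m ∧ ∃ Δ' ∈ D.gens m, Δ' ⊆ Δ ∧ Δ' ∉ ℬ ∧
          c * (5 * (1 / 2 : ℝ) ^ n) ≤ 5 * (1 / 2 : ℝ) ^ m := by
  classical
  -- side length positivity
  have hpow : ∀ k : ℤ, (0:ℝ) < 5 * (1/2:ℝ) ^ k := by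
    intro k; positivity
  have hΓsub : ∀ k : ℤ, ∀ Δ ∈ D.gens k, Δ ⊆ Γ := by
    intro k Δ hΔ
    rw [← D.cover k]; exact subset_sUnion_of_mem hΔ
  have hcenter_mem_self : ∀ k : ℤ, ∀ Δ ∈ D.gens k, D.center k Δ ∈ Δ := by
    intro k Δ hΔ
    apply D.ball_subset k Δ hΔ
    refine ⟨mem_ball_self ?_, D.center_mem k Δ hΔ⟩
    have := hpow k; nlinarith
  -- each generation is countable
  have hcount : ∀ k : ℤ, (D.gens k).Countable := by
    intro k
    set r := c₁ * (5 * (1/2:ℝ) ^ k) with hr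
    have hrpos : 0 < r := by have := hpow k; positivity
    apply Set.PairwiseDisjoint.countable_of_isOpen
      (s := fun Δ => ball (D.center k Δ) (r/2))
    · intro Δ hΔ Δ' hΔ' hne
      rw [Function.onFun]
      by_contra hdisj
      rw [Set.not_disjoint_iff] at hdisj
      obtain ⟨z, hz, hz'⟩ := hdisj
      have hdist : dist (D.center k Δ) (D.center k Δ') < r := by
        have := mem_ball.mp hz; have := mem_ball.mp hz'
        have := dist_triangle (D.center k Δ) z (D.center k Δ')
        rw [dist_comm (D.center k Δ) z] at this
        linarith
      have hmem : D.center k Δ' ∈ Δ := by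
        apply D.ball_subset k Δ hΔ
        exact ⟨by rwa [mem_ball, dist_comm], D.center_mem k Δ' hΔ'⟩
      have := (D.pairwiseDisjoint k) hΔ hΔ' hne
      exact absurd (Set.not_disjoint_iff.mpr
        ⟨D.center k Δ', hmem, hcenter_mem_self k Δ' hΔ'⟩) (not_not.mpr this)
    · intro Δ _; exact isOpen_ball
    · intro Δ _; exact ⟨D.center k Δ, mem_ball_self (by linarith)⟩
  -- choose N with C_B < N
  obtain ⟨N, hN⟩ := ENNReal.exists_nat_gt hC_B.ne
  have hNpos : 0 < N := by
    by_contra h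
    push_neg at h
    interval_cases N
    · simp at hN
  refine ⟨(1/2:ℝ) ^ N, by positivity, ?_⟩
  intro n Δ hΔ hΔΔ₀ hΔE'
  -- μ Δ is positive
  have hx : D.center n Δ ∈ Γ := D.center_mem n Δ hΔ
  set x := D.center n Δ with hxdef
  set r := c₁ * (5 * (1/2:ℝ) ^ n) with hrdef
  have hrpos : 0 < r := by have := hpow n; positivity
  have hμpos : 0 < μH[d] Δ := by
    by_cases hdiam : ENNReal.ofReal (r/2) < EMetric.diam Γ
    · have h := (hADR x hx (r/2) (by linarith) hdiam).1
      have hsub : Γ ∩ ball x (r/2) ⊆ Δ := by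
        intro y hy
        apply D.ball_subset n Δ hΔ
        refine ⟨?_, hy.1⟩
        have := mem_ball.mp hy.2
        rw [mem_ball]; rw [← hrdef]; linarith
      refine lt_of_lt_of_le (lt_of_lt_of_le ?_ h) (measure_mono hsub)
      apply ENNReal.div_pos
      · simp only [ne_eq, ENNReal.ofReal_eq_zero, not_le]
        positivity
      · exact hC_Atop.ne
    · push_neg at hdiam
      have hsub : E ⊆ Δ := by
        intro y hy
        apply D.ball_subset n Δ hΔ
        have hyΓ : y ∈ Γ := hΓsub n₀ Δ₀ hΔ₀ (hEΔ₀ hy)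
        refine ⟨?_, hyΓ⟩
        have : edist x y ≤ ENNReal.ofReal (r/2) :=
          le_trans (EMetric.edist_le_diam_of_mem hx hyΓ) hdiam
        rw [edist_dist] at this
        have := (ENNReal.ofReal_le_ofReal_iff (by linarith)).mp this
        rw [mem_ball, dist_comm]; linarith
      exact lt_of_lt_of_le hEpos (measure_mono hsub)
  -- μ Δ is finite
  have hμfin : μH[d] Δ < ⊤ := by
    have h1 : C₀⁻¹ * μH[d] Δ ≤ μH[d] (E ∩ Δ) := hdens n Δ hΔ hΔΔ₀ hΔE'
    have h2 : μH[d] (E ∩ Δ) ≤ μH[d] E := measure_mono inter_subset_left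
    have hC₀0 : C₀ ≠ 0 := by positivity
    have hinv : C₀⁻¹ ≠ 0 := by simp [hC₀top.ne]
    by_contra h
    push_neg at h
    rw [top_le_iff] at h
    rw [h, ENNReal.mul_top hinv] at h1
    exact absurd (le_trans h1 h2) (by simp [hEfin.ne])
  -- main contradiction argument
  by_contra hcon
  push_neg at hcon
  -- every cube of generation n+j, j < N, inside Δ is in ℬ
  have hall : ∀ j : Fin N, ∀ Δ' ∈ D.gens (n + (j:ℤ)), Δ' ⊆ Δ → Δ' ∈ ℬ := by
    intro j Δ' hΔ' hsub
    by_contra hnotB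
    have hineq : (1/2:ℝ) ^ N * (5 * (1/2:ℝ) ^ n) ≤ 5 * (1/2:ℝ) ^ (n + (j:ℤ)) := by
      rw [zpow_add₀ (by norm_num : (1/2:ℝ) ≠ 0), zpow_natCast]
      have : (1/2:ℝ) ^ N ≤ (1/2:ℝ) ^ (j:ℕ) :=
        pow_le_pow_of_le_one (by norm_num) (by norm_num) (le_of_lt j.2)
      have h5 : (0:ℝ) < (1/2:ℝ) ^ n := by positivity
      calc (1/2:ℝ) ^ N * (5 * (1/2:ℝ) ^ n) ≤ (1/2:ℝ) ^ (j:ℕ) * (5 * (1/2:ℝ) ^ n) := by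
            apply mul_le_mul_of_nonneg_right this; positivity
        _ = 5 * ((1/2:ℝ) ^ n * (1/2:ℝ) ^ (j:ℕ)) := by ring
    exact absurd hineq (not_le.mpr (hcon (n + (j:ℤ)) (by have := j.2; omega) Δ' hΔ' hsub hnotB))
  -- Carleson counting argument
  set T : Fin N → Set (Set (EuclideanSpace ℝ (Fin (d + 1)))) :=
    fun j => {Δ' | Δ' ∈ D.gens (n + (j:ℤ)) ∧ Δ' ⊆ Δ} with hT
  have hTcnt : ∀ j, (T j).Countable := fun j =>
    (hcount (n + (j:ℤ))).mono (fun s hs => hs.1)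
  have hcoverT : ∀ j : Fin N, μH[d] Δ ≤ ∑' Δ' : T j, μH[d] (Δ' : Set (EuclideanSpace ℝ (Fin (d + 1)))) := by
    intro j
    have hsub : Δ ⊆ ⋃ Δ' ∈ T j, Δ' := by
      intro y hy
      have hyΓ : y ∈ Γ := hΓsub n Δ hΔ hy
      rw [← D.cover (n + (j:ℤ))] at hyΓ
      obtain ⟨Δ', hΔ', hyΔ'⟩ := hyΓ
      have hsub' : Δ' ⊆ Δ := D.nested (n + (j:ℤ)) n (by omega) Δ' hΔ' Δ hΔ ⟨y, hyΔ', hy⟩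
      exact mem_biUnion ⟨hΔ', hsub'⟩ hyΔ'
    exact le_trans (measure_mono hsub) (measure_biUnion_le (μH[d]) (hTcnt j) id)
  let F : (Σ j : Fin N, T j) → {Δ' : (Σ m : ℤ, Set (EuclideanSpace ℝ (Fin (d + 1)))) //
      Δ'.2 ∈ D.gens Δ'.1 ∧ Δ'.2 ∈ ℬ ∧ Δ'.2 ⊆ Δ} :=
    fun p => ⟨⟨n + (p.1:ℤ), p.2.1⟩, p.2.2.1, hall p.1 p.2.1 p.2.2.1 p.2.2.2, p.2.2.2⟩
  have hinj : Function.Injective F := by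
    rintro ⟨j, s, hs⟩ ⟨j', s', hs'⟩ h
    have h' : (⟨n + (j:ℤ), s⟩ : Σ m : ℤ, Set (EuclideanSpace ℝ (Fin (d + 1)))) =
        ⟨n + (j':ℤ), s'⟩ := congrArg Subtype.val h
    have h1 : n + (j:ℤ) = n + (j':ℤ) := congrArg Sigma.fst h'
    have hj : j = j' := by ext; omega
    subst hj
    have hss : s = s' := sigma_mk_injective (β := fun _ : ℤ => Set (EuclideanSpace ℝ (Fin (d + 1)))) h'
    exact congrArg (Sigma.mk j) (Subtype.ext hss)
  have hchain : (N : ℝ≥0∞) * μH[d] Δ ≤ C_B * μH[d] Δ := by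
    calc (N : ℝ≥0∞) * μH[d] Δ = ∑ _j : Fin N, μH[d] Δ := by
          simp [Finset.sum_const, Finset.card_univ]
      _ ≤ ∑ j : Fin N, ∑' Δ' : T j, μH[d] (Δ' : Set (EuclideanSpace ℝ (Fin (d + 1)))) :=
          Finset.sum_le_sum fun j _ => hcoverT j
      _ = ∑' j : Fin N, ∑' Δ' : T j, μH[d] (Δ' : Set (EuclideanSpace ℝ (Fin (d + 1)))) := (tsum_fintype _).symm
      _ = ∑' p : (Σ j : Fin N, T j), μH[d] ((p.2 : Set (EuclideanSpace ℝ (Fin (d + 1))))) :=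
          (ENNReal.tsum_sigma (β := fun j => ↥(T j)) (fun j Δ' => μH[d] (Δ' : Set (EuclideanSpace ℝ (Fin (d + 1)))))).symm
      _ = ∑' p : (Σ j : Fin N, T j), μH[d] ((F p).1.2) := rfl
      _ ≤ ∑' Δ' : {Δ' : (Σ m : ℤ, Set (EuclideanSpace ℝ (Fin (d + 1)))) //
            Δ'.2 ∈ D.gens Δ'.1 ∧ Δ'.2 ∈ ℬ ∧ Δ'.2 ⊆ Δ}, μH[d] Δ'.1.2 :=
          ENNReal.tsum_comp_le_tsum_of_injective hinj _
      _ ≤ C_B * μH[d] Δ := hCar n Δ hΔ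
  have hNle : (N : ℝ≥0∞) ≤ C_B :=
    (ENNReal.mul_le_mul_iff_left hμpos.ne' hμfin.ne).mp hchain
  exact absurd hN (not_lt.mpr hNle)
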